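/- arXiv:1005.4503 — 3 statements merged into one kernel-verified Lean document; each statement's English description precedes it below -/
import Mathlib

section
/- Let K be a field, let M >= 1 be an integer, and for each p >= 1 let b_{p,0} be in m^{M+p-1} and b_{p,i} in m^{M+p} for i = 1,...,n, where m is the maximal ideal of K[[x_1,...,x_n]]. Let phi_p be the local K-algebra endomorphism of K[[x_1,...,x_n]] determined by substituting x_i + b_{p,i} for x_i, let Phi_p = phi_p o phi_{p-1} o ... o phi_1, let v_p = 1 + b_{p,0}, and define u_p = v_p * phi_p(u_{p-1}) inductively with u_0 = 1. Then: (1) for each i there exists b_i in m^{M+1} such that the sequence (Phi_p(x_i))_{p>=1} converges in the m-adic topology to x_i + b_i (i.e. for every N there is P with Phi_p(x_i) - (x_i + b_i) in m^N for all p >= P), and the substitution map x_i -> x_i + b_i is a local K-algebra automorphism of K[[x_1,...,x_n]]; (2) the sequence (u_p)_{p>=1} converges in the m-adic topology to a unit of the form 1 + b_0 with b_0 in m^M. -/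
/-!  Setup: formal power series ring `K[[x_1,…,x_n]]`, its maximal ideal,
formal partial derivatives, Jacobian and Tjurina ideals, the order of a
power series, and right/contact equivalence. -/

/-- The formal partial derivative of a multivariate power series with respect
to the `i`-th variable. -/
noncomputable def pderiv {n : ℕ} {K : Type} [Field K] (i : Fin n)
    (f : MvPowerSeries (Fin n) K) : MvPowerSeries (Fin n) K :=
  fun d => ((d i : K) + 1) * MvPowerSeries.coeff (d + Finsupp.single i 1) f

/-- The Jacobian ideal `J(f) = ⟨f_{x_1},…,f_{x_n}⟩`. -/
noncomputable def jacobianIdeal {n : ℕ} {K : Type} [Field K]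
    (f : MvPowerSeries (Fin n) K) : Ideal (MvPowerSeries (Fin n) K) :=
  Ideal.span (Set.range fun i => pderiv i f)

/-- The Tjurina ideal `T(f) = ⟨f⟩ + J(f)`. -/
noncomputable def tjurinaIdeal {n : ℕ} {K : Type} [Field K]
    (f : MvPowerSeries (Fin n) K) : Ideal (MvPowerSeries (Fin n) K) :=
  Ideal.span {f} ⊔ jacobianIdeal f

/-- The maximal ideal `m = ⟨x_1,…,x_n⟩` of `K[[x_1,…,x_n]]`. -/
noncomputable def maxIdeal (n : ℕ) (K : Type) [Field K] :
    Ideal (MvPowerSeries (Fin n) K) :=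
  Ideal.span (Set.range (MvPowerSeries.X : Fin n → MvPowerSeries (Fin n) K))

/-- The order of a power series: the largest `k` with `f ∈ m^k`
(for `f ≠ 0` this supremum is attained). -/
noncomputable def ord {n : ℕ} {K : Type} [Field K]
    (f : MvPowerSeries (Fin n) K) : ℕ :=
  sSup {k : ℕ | f ∈ maxIdeal n K ^ k}

/-- Right equivalence: `f = φ(g)` for a `K`-algebra automorphism `φ`. -/
def RightEquiv {n : ℕ} {K : Type} [Field K]
    (f g : MvPowerSeries (Fin n) K) : Prop :=
  ∃ φ : MvPowerSeries (Fin n) K ≃ₐ[K] MvPowerSeries (Fin n) K, f = φ g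

/-- Contact equivalence: `f = u * φ(g)` for a unit `u` and a `K`-algebra
automorphism `φ`. -/
def ContactEquiv {n : ℕ} {K : Type} [Field K]
    (f g : MvPowerSeries (Fin n) K) : Prop :=
  ∃ (u : (MvPowerSeries (Fin n) K)ˣ)
    (φ : MvPowerSeries (Fin n) K ≃ₐ[K] MvPowerSeries (Fin n) K),
    f = (u : MvPowerSeries (Fin n) K) * φ g

/-- Convergence of a sequence of power series in the `m`-adic topology. -/
def MAdicTendsto {n : ℕ} {K : Type} [Field K]
    (g : ℕ → MvPowerSeries (Fin n) K) (l : MvPowerSeries (Fin n) K) : Prop :=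
  ∀ N : ℕ, ∃ P : ℕ, ∀ p ≥ P, g p - l ∈ maxIdeal n K ^ N

/-! The ring `K[[x_1,…,x_n]]` is `m`-adically complete and Hausdorff. A local endomorphism
moving every `x_i` by an element of `m^j` moves every power series by an element of `m^j`:
on a polynomial truncation this is a ring computation, and the tail already lies in `m^j`.
Hence the successive differences of `Φ_p(x_i)` and of `u_p` lie in `m^(M+p)`, so both sequences
converge. The limit substitution `ψ : x_i ↦ x_i + b_i`, with `b_i ∈ m^2`, sends `m^k` into itself
with `ψ g - g ∈ m^(k+1)`; this makes `ψ` injective and, by successive approximation, surjective. -/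

namespace IsPrecomplete

variable {R : Type*} [CommRing R] {I : Ideal R}

theorem sub_mem_pow_of_succ_sub_mem_pow {g : ℕ → R} {k : ℕ}
    (hg : ∀ p, g (p + 1) - g p ∈ I ^ (k + p)) {p q : ℕ} (hpq : p ≤ q) :
    g q - g p ∈ I ^ (k + p) := by
  induction q, hpq using Nat.le_induction with
  | base => simp
  | succ q hpq ih =>
    rw [← sub_add_sub_cancel]
    exact add_mem (Ideal.pow_le_pow_right (by omega) (hg q)) ih

theorem exists_sub_mem_pow [IsPrecomplete I R] {g : ℕ → R} (k : ℕ)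
    (hg : ∀ p, g (p + 1) - g p ∈ I ^ (k + p)) : ∃ L, ∀ p, g p - L ∈ I ^ (k + p) := by
  obtain ⟨L, hL⟩ := IsPrecomplete.prec (I := I) (M := R) (f := g) inferInstance
    fun {p q} hpq => by
      rw [SModEq.sub_mem, smul_eq_mul, Ideal.mul_top, ← neg_mem_iff, neg_sub]
      exact Ideal.pow_le_pow_right (by omega) (sub_mem_pow_of_succ_sub_mem_pow hg hpq)
  refine ⟨L, fun p => ?_⟩
  have hL' := hL (k + p)
  rw [SModEq.sub_mem, smul_eq_mul, Ideal.mul_top] at hL'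
  rw [← sub_add_sub_cancel _ (g (k + p))]
  refine add_mem ?_ hL'
  simpa using neg_mem (sub_mem_pow_of_succ_sub_mem_pow hg (by omega : p ≤ k + p))

end IsPrecomplete

theorem IsHausdorff.eq_zero_of_forall_mem_pow {R : Type*} [CommRing R] {I : Ideal R}
    [IsHausdorff I R] {x : R} (hx : ∀ k, x ∈ I ^ k) : x = 0 :=
  IsHausdorff.haus (I := I) inferInstance x fun k => by simpa [SModEq.sub_mem] using hx k

theorem IsAdicComplete.bijective_of_sub_mem_pow_succ {R : Type*} [CommRing R] {I : Ideal R}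
    [IsAdicComplete I R] (ψ : R →+* R) (hψ : ∀ k, ∀ g ∈ I ^ k, ψ g - g ∈ I ^ (k + 1)) :
    Function.Bijective ψ := by
  have hψ_pow : ∀ k, ∀ g ∈ I ^ k, ψ g ∈ I ^ k := fun k g hg => by
    simpa using add_mem (Ideal.pow_le_pow_right k.le_succ (hψ k g hg)) hg
  refine ⟨(injective_iff_map_eq_zero ψ).2 fun g hg => ?_, fun h => ?_⟩
  · refine IsHausdorff.eq_zero_of_forall_mem_pow (I := I) fun k => ?_
    induction k with
    | zero => simp
    | succ k ih => simpa [hg] using hψ k g ih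
  · -- The defect `ψ r - h` of the iteration `r ↦ r - (ψ r - h)` gains a power of `I` per step.
    let r : ℕ → R := fun q => Nat.rec h (fun _ r => r - (ψ r - h)) q
    have hdefect : ∀ q, ψ (r q) - h ∈ I ^ (q + 1) := by
      intro q
      induction q with
      | zero => simpa [r] using hψ 0 h (by simp)
      | succ q ih =>
        have e : ψ (r (q + 1)) - h = -(ψ (ψ (r q) - h) - (ψ (r q) - h)) := by
          simp only [r, map_sub]; ring
        rw [e]
        exact neg_mem (hψ _ _ ih)
    obtain ⟨L, hL⟩ := IsPrecomplete.exists_sub_mem_pow (I := I) (g := r) 1 fun q => by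
      simpa [r, add_comm 1] using neg_mem (hdefect q)
    refine ⟨L, sub_eq_zero.1 (IsHausdorff.eq_zero_of_forall_mem_pow (I := I) fun k => ?_)⟩
    have e : ψ L - h = -ψ (r k - L) + (ψ (r k) - h) := by rw [map_sub]; ring
    rw [e]
    exact add_mem (neg_mem (hψ_pow k _ (Ideal.pow_le_pow_right (by omega) (hL k))))
      (Ideal.pow_le_pow_right (by omega) (hdefect k))

namespace MvPowerSeries

variable {n : ℕ} {K : Type} [Field K]

instance : IsAdicComplete (maxIdeal n K) (MvPowerSeries (Fin n) K) := by
  unfold maxIdeal; infer_instance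

theorem maxIdeal_le_ker_constantCoeff :
    maxIdeal n K ≤ RingHom.ker (constantCoeff (σ := Fin n) (R := K)) :=
  Ideal.span_le.2 <| Set.range_subset_iff.2 fun i => by simp

theorem le_order_of_mem_maxIdeal_pow {N : ℕ} {f : MvPowerSeries (Fin n) K}
    (hf : f ∈ maxIdeal n K ^ N) : (N : ℕ∞) ≤ f.order := by
  induction N generalizing f with
  | zero => simp
  | succ N ih =>
    rw [pow_succ] at hf
    refine Submodule.mul_induction_on hf (fun x hx y hy => ?_) (fun x y hx hy => ?_)
    · have hy1 : (1 : ℕ∞) ≤ y.order :=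
        one_le_order_iff_constCoeff_eq_zero.2 (maxIdeal_le_ker_constantCoeff hy)
      calc ((N + 1 : ℕ) : ℕ∞) = N + 1 := by push_cast; rfl
        _ ≤ x.order + y.order := add_le_add (ih hx) hy1
        _ ≤ (x * y).order := le_order_mul
    · exact (le_min hx hy).trans min_order_le_add

theorem coe_mem_maxIdeal_pow {N : ℕ} {p : MvPolynomial (Fin n) K}
    (hp : p ∈ MvPolynomial.idealOfVars (Fin n) K ^ N) :
    (p : MvPowerSeries (Fin n) K) ∈ maxIdeal n K ^ N := by
  have h := Ideal.mem_map_of_mem MvPolynomial.coeToMvPowerSeries.ringHom hp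
  have hX : ⇑MvPolynomial.coeToMvPowerSeries.ringHom ∘ MvPolynomial.X =
      (X : Fin n → MvPowerSeries (Fin n) K) :=
    funext MvPolynomial.coe_X
  rwa [Ideal.map_pow, Ideal.map_span, ← Set.range_comp, hX] at h

theorem sub_truncTotal_mem_maxIdeal_pow (f : MvPowerSeries (Fin n) K) (N : ℕ) :
    f - truncTotal N f ∈ maxIdeal n K ^ N := by
  let s : ℕ → MvPowerSeries (Fin n) K := fun k => truncTotal (N + k) f
  have hs : ∀ k, s (k + 1) - s k ∈ maxIdeal n K ^ (N + k) := fun k => by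
    have h := coe_mem_maxIdeal_pow (truncTotal_sub_truncTotal_mem_pow_idealOfVars
      (by omega : N + k ≤ N + (k + 1)) le_rfl f)
    rwa [← MvPolynomial.coeToMvPowerSeries.ringHom_apply, map_sub] at h
  obtain ⟨L, hL⟩ := IsPrecomplete.exists_sub_mem_pow (I := maxIdeal n K) N hs
  have hfL : f = L := by
    ext d
    have hd := coeff_of_lt_order <|
      (le_order_of_mem_maxIdeal_pow (hL (d.degree + 1))).trans_lt'
        (by exact_mod_cast (by omega : d.degree < N + (d.degree + 1)))
    rw [map_sub, sub_eq_zero, MvPolynomial.coeff_coe, coeff_truncTotal _ (by omega)] at hd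
    exact hd
  simpa [hfL, s] using neg_mem (hL 0)

theorem map_mem_maxIdeal_pow {φ : MvPowerSeries (Fin n) K →+* MvPowerSeries (Fin n) K}
    (hφ : ∀ g ∈ maxIdeal n K, φ g ∈ maxIdeal n K) {k : ℕ} {g : MvPowerSeries (Fin n) K}
    (hg : g ∈ maxIdeal n K ^ k) : φ g ∈ maxIdeal n K ^ k :=
  Ideal.le_comap_pow φ k (Ideal.pow_right_mono (fun g hg => hφ g hg) k hg)

theorem map_coe_sub_coe_mem (φ : MvPowerSeries (Fin n) K →ₐ[K] MvPowerSeries (Fin n) K)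
    {I : Ideal (MvPowerSeries (Fin n) K)} (hX : ∀ i, φ (X i) - X i ∈ I)
    (p : MvPolynomial (Fin n) K) : φ p - p ∈ I := by
  induction p using MvPolynomial.induction_on with
  | C a => simp [MvPowerSeries.c_eq_algebraMap]
  | add p q hp hq =>
    rw [MvPolynomial.coe_add, map_add, add_sub_add_comm]
    exact add_mem hp hq
  | mul_X p i hp =>
    rw [MvPolynomial.coe_mul, MvPolynomial.coe_X, map_mul]
    exact I.mul_sub_mul_mem hp (hX i)

section LocalEndomorphism

variable {φ : MvPowerSeries (Fin n) K →ₐ[K] MvPowerSeries (Fin n) K}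

theorem map_sub_self_mem_maxIdeal_pow (hφ : ∀ g ∈ maxIdeal n K, φ g ∈ maxIdeal n K) {j : ℕ}
    (hX : ∀ i, φ (X i) - X i ∈ maxIdeal n K ^ j) (g : MvPowerSeries (Fin n) K) :
    φ g - g ∈ maxIdeal n K ^ j := by
  have hr := sub_truncTotal_mem_maxIdeal_pow g j
  have e : φ g - g = (φ (truncTotal j g) - truncTotal j g) +
      (φ (g - truncTotal j g) - (g - truncTotal j g)) := by rw [map_sub]; ring
  rw [e]
  exact add_mem (map_coe_sub_coe_mem φ hX _)
    (sub_mem (map_mem_maxIdeal_pow (φ := φ.toRingHom) hφ hr) hr)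

theorem map_sub_self_mem_maxIdeal_pow_add (hφ : ∀ g ∈ maxIdeal n K, φ g ∈ maxIdeal n K)
    {j : ℕ} (hX : ∀ i, φ (X i) - X i ∈ maxIdeal n K ^ (j + 1)) {k : ℕ}
    {g : MvPowerSeries (Fin n) K} (hg : g ∈ maxIdeal n K ^ k) :
    φ g - g ∈ maxIdeal n K ^ (k + j) := by
  induction k generalizing g with
  | zero =>
    simpa using Ideal.pow_le_pow_right j.le_succ (map_sub_self_mem_maxIdeal_pow hφ hX g)
  | succ k ih =>
    rw [pow_succ'] at hg
    refine Submodule.mul_induction_on hg (fun x hx y hy => ?_) (fun x y hx hy => ?_)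
    · have e : φ (x * y) - x * y = φ x * (φ y - y) + (φ x - x) * y := by
        rw [map_mul]; ring
      rw [e]
      refine add_mem ?_ ?_
      · simpa [pow_succ', add_right_comm] using Ideal.mul_mem_mul (hφ x hx) (ih hy)
      · simpa [← pow_add, add_comm, add_left_comm] using
          Ideal.mul_mem_mul (map_sub_self_mem_maxIdeal_pow hφ hX x) hy
    · simpa [add_sub_add_comm] using add_mem hx hy

end LocalEndomorphism

theorem exists_algEquiv_map_X_eq_X_add {b : Fin n → MvPowerSeries (Fin n) K}
    (hb : ∀ i, b i ∈ maxIdeal n K ^ 2) :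
    ∃ ψ : MvPowerSeries (Fin n) K ≃ₐ[K] MvPowerSeries (Fin n) K,
      (∀ g ∈ maxIdeal n K, ψ g ∈ maxIdeal n K) ∧ ∀ i, ψ (X i) = X i + b i := by
  have hXb : ∀ i, X i + b i ∈ maxIdeal n K := fun i =>
    add_mem (Ideal.subset_span ⟨i, rfl⟩) (Ideal.pow_le_self two_ne_zero (hb i))
  let φ := substAlgHom (R := K) <| hasSubst_of_constantCoeff_zero fun i =>
    maxIdeal_le_ker_constantCoeff (hXb i)
  have hφX : ∀ i, φ (X i) = X i + b i := substAlgHom_X _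
  have hφ : maxIdeal n K ≤ (maxIdeal n K).comap φ :=
    Ideal.span_le.2 <| Set.range_subset_iff.2 fun i => by simpa [hφX] using hXb i
  have hbij : Function.Bijective φ :=
    IsAdicComplete.bijective_of_sub_mem_pow_succ (I := maxIdeal n K) φ.toRingHom
      fun k g hg => map_sub_self_mem_maxIdeal_pow_add (fun _ hg => hφ hg)
        (fun i => by simpa [hφX] using hb i) hg
  exact ⟨AlgEquiv.ofBijective φ hbij, fun _ hg => hφ hg, hφX⟩

theorem isUnit_one_add_of_mem_maxIdeal {x : MvPowerSeries (Fin n) K} (hx : x ∈ maxIdeal n K) :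
    IsUnit (1 + x) := by
  simpa [add_comm] using
    Ideal.mem_jacobson_bot.1 (IsAdicComplete.le_jacobson_bot (maxIdeal n K) hx) 1

end MvPowerSeries

theorem exists_mAdicTendsto_of_succ_sub_mem_pow {n : ℕ} {K : Type} [Field K]
    {g : ℕ → MvPowerSeries (Fin n) K} (k : ℕ)
    (hg : ∀ p, g (p + 1) - g p ∈ maxIdeal n K ^ (k + p)) :
    ∃ L, g 0 - L ∈ maxIdeal n K ^ k ∧ MAdicTendsto g L := by
  obtain ⟨L, hL⟩ := IsPrecomplete.exists_sub_mem_pow (I := maxIdeal n K) k hg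
  exact ⟨L, hL 0, fun N => ⟨N, fun p hp => Ideal.pow_le_pow_right (by omega) (hL p)⟩⟩

/-- convergence lemma, parts (1) and (2):
Given `b_{p,0} ∈ m^{M+p-1}`, `b_{p,i} ∈ m^{M+p}`, the local substitution
endomorphisms `φ_p : x_i ↦ x_i + b_{p,i}`, the compositions
`Φ_p = φ_p ∘ ⋯ ∘ φ_1`, and the units `u_p = (1 + b_{p,0})·φ_p(u_{p-1})`
with `u_0 = 1`, then:
(1) each sequence `(Φ_p(x_i))_p` converges `m`-adically to some `x_i + b_i`
with `b_i ∈ m^{M+1}`, and the substitution `x_i ↦ x_i + b_i` is a local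
`K`-algebra automorphism;
(2) the sequence `(u_p)_p` converges `m`-adically to a unit `1 + b_0` with
`b_0 ∈ m^M`. -/
theorem convergence_lemma
    {n : ℕ} {K : Type} [Field K] (M : ℕ) (hM : 1 ≤ M)
    (b0 : ℕ → MvPowerSeries (Fin n) K)
    (hb0 : ∀ p, 1 ≤ p → b0 p ∈ maxIdeal n K ^ (M + p - 1))
    (b : ℕ → Fin n → MvPowerSeries (Fin n) K)
    (hb : ∀ p, 1 ≤ p → ∀ i, b p i ∈ maxIdeal n K ^ (M + p))
    (φ : ℕ → (MvPowerSeries (Fin n) K →ₐ[K] MvPowerSeries (Fin n) K))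
    (hφloc : ∀ p, ∀ g ∈ maxIdeal n K, φ p g ∈ maxIdeal n K)
    (hφX : ∀ p, 1 ≤ p → ∀ i,
      φ p (MvPowerSeries.X i) = MvPowerSeries.X i + b p i)
    (Φ : ℕ → (MvPowerSeries (Fin n) K →ₐ[K] MvPowerSeries (Fin n) K))
    (hΦ0 : Φ 0 = AlgHom.id K (MvPowerSeries (Fin n) K))
    (hΦ : ∀ p, Φ (p + 1) = (φ (p + 1)).comp (Φ p))
    (u : ℕ → MvPowerSeries (Fin n) K)
    (hu0 : u 0 = 1)
    (hu : ∀ p, u (p + 1) = (1 + b0 (p + 1)) * φ (p + 1) (u p)) :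
    (∃ blim : Fin n → MvPowerSeries (Fin n) K,
      (∀ i, blim i ∈ maxIdeal n K ^ (M + 1)) ∧
      (∀ i, MAdicTendsto (fun p => Φ p (MvPowerSeries.X i))
        (MvPowerSeries.X i + blim i)) ∧
      ∃ ψ : MvPowerSeries (Fin n) K ≃ₐ[K] MvPowerSeries (Fin n) K,
        (∀ g ∈ maxIdeal n K, ψ g ∈ maxIdeal n K) ∧
        ∀ i, ψ (MvPowerSeries.X i) = MvPowerSeries.X i + blim i) ∧
    (∃ b0lim : MvPowerSeries (Fin n) K,
      b0lim ∈ maxIdeal n K ^ M ∧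
      MAdicTendsto u (1 + b0lim) ∧
      IsUnit (1 + b0lim)) := by
  have hstep : ∀ p g, φ (p + 1) g - g ∈ maxIdeal n K ^ (M + 1 + p) := fun p =>
    MvPowerSeries.map_sub_self_mem_maxIdeal_pow (hφloc (p + 1)) fun i => by
      rw [hφX (p + 1) le_add_self, add_sub_cancel_left, add_right_comm]
      exact hb (p + 1) le_add_self i
  have hΦX : ∀ i, ∃ L, MvPowerSeries.X i - L ∈ maxIdeal n K ^ (M + 1) ∧
      MAdicTendsto (fun p => Φ p (MvPowerSeries.X i)) L := fun i => by
    simpa [hΦ0] using exists_mAdicTendsto_of_succ_sub_mem_pow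
      (g := fun p => Φ p (MvPowerSeries.X i)) (M + 1) fun p => by
      simpa [hΦ p] using hstep p (Φ p (MvPowerSeries.X i))
  choose L hL0 hLlim using hΦX
  have hblim : ∀ i, L i - MvPowerSeries.X i ∈ maxIdeal n K ^ (M + 1) := fun i => by
    simpa using neg_mem (hL0 i)
  obtain ⟨ψ, hψloc, hψX⟩ := MvPowerSeries.exists_algEquiv_map_X_eq_X_add fun i =>
    Ideal.pow_le_pow_right (by omega) (hblim i)
  refine ⟨⟨fun i => L i - MvPowerSeries.X i, hblim, fun i => by simpa using hLlim i,
    ψ, hψloc, hψX⟩, ?_⟩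
  obtain ⟨U, hU0, hUlim⟩ := exists_mAdicTendsto_of_succ_sub_mem_pow (g := u) M fun p => by
    have e : u (p + 1) - u p = (φ (p + 1) (u p) - u p) + b0 (p + 1) * φ (p + 1) (u p) := by
      rw [hu p]; ring
    rw [e]
    refine add_mem (Ideal.pow_le_pow_right (by omega) (hstep p (u p)))
      (Ideal.mul_mem_right _ _ ?_)
    simpa using hb0 (p + 1) le_add_self
  have hU1 : U - 1 ∈ maxIdeal n K ^ M := by simpa [hu0] using neg_mem hU0
  exact ⟨U - 1, hU1, by simpa using hUlim,
    MvPowerSeries.isUnit_one_add_of_mem_maxIdeal (Ideal.pow_le_self (by omega) hU1)⟩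
end

section
/- In the situation of the convergence lemma (M >= 1, b_{p,0} in m^{M+p-1}, b_{p,i} in m^{M+p}, phi_p the substitution x_i -> x_i + b_{p,i}, Phi_p = phi_p o ... o phi_1, u_p = (1 + b_{p,0}) * phi_p(u_{p-1}) with u_0 = 1, and with limits: the automorphism Phi given by x_i -> x_i + b_i = lim Phi_p(x_i) and the unit u = lim u_p): for every power series f_0 in K[[x_1,...,x_n]], the sequence (Phi_p(f_0))_{p>=1} converges in the m-adic topology to Phi(f_0), and the sequence (u_p * Phi_p(f_0))_{p>=1} converges in the m-adic topology to u * Phi(f_0). -/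
/-!
Every `K`-algebra endomorphism `ψ` of `K[[x]]` is local: if `ψ(x_i)` had a nonzero constant term
`c`, the unit `x_i - c` would map to the non-unit `ψ(x_i) - c`. Hence `ψ(m^N) ⊆ m^N`, and writing
`f = T + r` with `T` the truncation of `f` below degree `N` and `r ∈ m^N`, two such endomorphisms
that agree modulo `m^N` on the variables agree modulo `m^N` on every `f`. So `Φ_p(f) → Ψ(f)` as
soon as `Φ_p(x_i) → Ψ(x_i)`, and `u_p Φ_p(f) → u Ψ(f)` because `m`-adic limits are multiplicative.
-/

namespace MvPowerSeries

variable {σ τ R K : Type*} [CommRing R] [Field K]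

theorem sub_truncTotal_mem_span_X_pow [Finite σ] (f : MvPowerSeries σ R) (N : ℕ) :
    f - (truncTotal N f : MvPowerSeries σ R) ∈ Ideal.span (Set.range X) ^ N := by
  -- Pass to the isomorphic adic completion of `R[X]`, where `m ^ N` is the kernel of `eval N`.
  let e := (toAdicCompletionAlgEquiv σ R).toRingEquiv
  have hmap : Ideal.map e (Ideal.span (Set.range X)) =
      (MvPolynomial.idealOfVars σ R).map (algebraMap _ (AdicCompletion _ (MvPolynomial σ R))) := by
    simp_rw [Ideal.map_span, ← Set.range_comp]
    congr 2; ext1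
    simp [e, AdicCompletion.algebraMap_apply, ← MvPolynomial.coe_X, toAdicCompletion_coe]
  have hker : e (f - truncTotal N f) ∈
      (AdicCompletion.eval (MvPolynomial.idealOfVars σ R) (MvPolynomial σ R) N).ker := by
    change AdicCompletion.eval _ _ N (toAdicCompletion σ R (f - truncTotal N f)) = 0
    rw [map_sub, toAdicCompletion_coe, map_sub, sub_eq_zero, AdicCompletion.eval_apply,
      toAdicCompletion_apply_eq_mk_truncTotal, AdicCompletion.eval_of]
    rfl
  rw [← AdicCompletion.pow_smul_top_eq_ker_eval (MvPolynomial.idealOfVars_fg σ R),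
    Ideal.smul_top_eq_map, Submodule.restrictScalars_mem, Ideal.map_pow, ← hmap,
    ← Ideal.map_pow] at hker
  exact Ideal.apply_mem_of_equiv_iff.mp hker

theorem mem_span_X_pow_of_coeff_eq_zero [Finite σ] {f : MvPowerSeries σ R} {N : ℕ}
    (hf : ∀ d, d.degree < N → coeff d f = 0) : f ∈ Ideal.span (Set.range X) ^ N := by
  have htrunc : truncTotal N f = 0 := by
    ext d
    simp only [coeff_truncTotal_eq_ite, MvPolynomial.coeff_zero, ite_eq_right_iff]
    exact hf d
  simpa [htrunc] using sub_truncTotal_mem_span_X_pow f N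

theorem constantCoeff_map_X (ψ : MvPowerSeries σ K →ₐ[K] MvPowerSeries τ K) (i : σ) :
    constantCoeff (ψ (X i)) = 0 := by
  by_contra hc
  set c := constantCoeff (ψ (X i))
  -- `X i - c` is a unit, but its image `ψ (X i) - c` has constant coefficient `0`.
  have hunit : IsUnit (X i - algebraMap K _ c : MvPowerSeries σ K) := by
    simpa [isUnit_iff_constantCoeff, algebraMap_apply] using hc
  have himage := (hunit.map ψ).map (constantCoeff (σ := τ) (R := K))
  rw [map_sub, AlgHom.commutes, map_sub, algebraMap_apply, constantCoeff_C,
    Algebra.algebraMap_self, RingHom.id_apply, sub_self] at himage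
  exact not_isUnit_zero himage

theorem map_X_mem_span_X [Finite τ] (ψ : MvPowerSeries σ K →ₐ[K] MvPowerSeries τ K) (i : σ) :
    ψ (X i) ∈ Ideal.span (Set.range X) := by
  have h1 : ψ (X i) ∈ Ideal.span (Set.range X) ^ 1 :=
    mem_span_X_pow_of_coeff_eq_zero fun d hd => by
      obtain rfl : d = 0 := (Finsupp.degree_eq_zero_iff d).mp (by omega)
      exact constantCoeff_map_X ψ i
  rwa [pow_one] at h1

theorem map_mem_span_X_pow [Finite τ] (ψ : MvPowerSeries σ K →ₐ[K] MvPowerSeries τ K) {N : ℕ}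
    {f : MvPowerSeries σ K} (hf : f ∈ Ideal.span (Set.range X) ^ N) :
    ψ f ∈ Ideal.span (Set.range X) ^ N := by
  have hle : Ideal.map ψ (Ideal.span (Set.range X)) ≤ Ideal.span (Set.range (X (σ := τ))) := by
    rw [Ideal.map_span, Ideal.span_le]
    rintro _ ⟨_, ⟨i, rfl⟩, rfl⟩
    exact map_X_mem_span_X ψ i
  have := Ideal.mem_map_of_mem ψ hf
  rw [Ideal.map_pow] at this
  exact Ideal.pow_right_mono hle N this

theorem map_coe_sub_map_coe_mem {A : Type*} [CommRing A] [Algebra R A]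
    (ψ ψ' : MvPowerSeries σ R →ₐ[R] A) {J : Ideal A} (h : ∀ i, ψ (X i) - ψ' (X i) ∈ J)
    (P : MvPolynomial σ R) : ψ P - ψ' P ∈ J := by
  have hext : (Ideal.Quotient.mkₐ R J).comp (ψ.comp (MvPolynomial.coeToMvPowerSeries.algHom R)) =
      (Ideal.Quotient.mkₐ R J).comp (ψ'.comp (MvPolynomial.coeToMvPowerSeries.algHom R)) :=
    MvPolynomial.algHom_ext fun i => by
      simpa [Ideal.Quotient.mkₐ_eq_mk, Ideal.Quotient.eq] using h i
  simpa [Ideal.Quotient.mkₐ_eq_mk, Ideal.Quotient.eq] using congr($hext P)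

theorem map_sub_map_mem_span_X_pow [Finite σ] [Finite τ]
    (ψ ψ' : MvPowerSeries σ K →ₐ[K] MvPowerSeries τ K) {N : ℕ}
    (h : ∀ i, ψ (X i) - ψ' (X i) ∈ Ideal.span (Set.range X) ^ N) (f : MvPowerSeries σ K) :
    ψ f - ψ' f ∈ Ideal.span (Set.range X) ^ N := by
  set T : MvPolynomial σ K := truncTotal N f
  have hrem := sub_truncTotal_mem_span_X_pow f N
  have hsplit : ψ f - ψ' f = (ψ (f - T) - ψ' (f - T)) + (ψ T - ψ' T) := by
    simp only [map_sub]; ring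
  rw [hsplit]
  exact add_mem (sub_mem (map_mem_span_X_pow ψ hrem) (map_mem_span_X_pow ψ' hrem))
    (map_coe_sub_map_coe_mem ψ ψ' h T)

end MvPowerSeries

section MAdicTendsto

variable {n : ℕ} {K : Type} [Field K]

theorem mAdicTendsto_iff_eventually {g : ℕ → MvPowerSeries (Fin n) K}
    {l : MvPowerSeries (Fin n) K} :
    MAdicTendsto g l ↔ ∀ N, ∀ᶠ p in Filter.atTop, g p - l ∈ maxIdeal n K ^ N := by
  simp only [MAdicTendsto, Filter.eventually_atTop]

theorem MAdicTendsto.mul {g h : ℕ → MvPowerSeries (Fin n) K} {l l' : MvPowerSeries (Fin n) K}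
    (hg : MAdicTendsto g l) (hh : MAdicTendsto h l') :
    MAdicTendsto (fun p => g p * h p) (l * l') := by
  rw [mAdicTendsto_iff_eventually] at hg hh ⊢
  intro N
  filter_upwards [hg N, hh N] with p hgp hhp
  rw [show g p * h p - l * l' = g p * (h p - l') + (g p - l) * l' by ring]
  exact add_mem (Ideal.mul_mem_left _ _ hhp) (Ideal.mul_mem_right _ _ hgp)

theorem MAdicTendsto.map_of_map_X
    {Φ : ℕ → (MvPowerSeries (Fin n) K →ₐ[K] MvPowerSeries (Fin n) K)}
    {Ψ : MvPowerSeries (Fin n) K →ₐ[K] MvPowerSeries (Fin n) K}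
    (h : ∀ i, MAdicTendsto (fun p => Φ p (MvPowerSeries.X i)) (Ψ (MvPowerSeries.X i)))
    (f : MvPowerSeries (Fin n) K) : MAdicTendsto (fun p => Φ p f) (Ψ f) := by
  simp only [mAdicTendsto_iff_eventually] at h ⊢
  intro N
  filter_upwards [Filter.eventually_all.mpr fun i => h i N] with p hp
  exact MvPowerSeries.map_sub_map_mem_span_X_pow (Φ p) Ψ hp f

end MAdicTendsto

theorem convergence_lemma_apply_general
    {n : ℕ} {K : Type} [Field K]
    (Φ : ℕ → (MvPowerSeries (Fin n) K →ₐ[K] MvPowerSeries (Fin n) K))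
    (u : ℕ → MvPowerSeries (Fin n) K)
    (blim : Fin n → MvPowerSeries (Fin n) K)
    (hblim : ∀ i, MAdicTendsto (fun p => Φ p (MvPowerSeries.X i))
      (MvPowerSeries.X i + blim i))
    (Ψ : MvPowerSeries (Fin n) K ≃ₐ[K] MvPowerSeries (Fin n) K)
    (hΨ : ∀ i, Ψ (MvPowerSeries.X i) = MvPowerSeries.X i + blim i)
    (ulim : MvPowerSeries (Fin n) K)
    (hulim : MAdicTendsto u ulim) :
    ∀ f0 : MvPowerSeries (Fin n) K,
      MAdicTendsto (fun p => Φ p f0) (Ψ f0) ∧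
      MAdicTendsto (fun p => u p * Φ p f0) (ulim * Ψ f0) := by
  intro f0
  have hΦ : MAdicTendsto (fun p => Φ p f0) (Ψ f0) :=
    MAdicTendsto.map_of_map_X (Ψ := Ψ.toAlgHom) (fun i => by simpa [hΨ] using hblim i) f0
  exact ⟨hΦ, hulim.mul hΦ⟩

/-- convergence lemma, parts (3) and (4):
in the situation of the convergence lemma, with `Ψ` the limit automorphism
`x_i ↦ x_i + b_i` (where `Φ_p(x_i) → x_i + b_i`) and `u∞` the `m`-adic limit
of `(u_p)`, for every power series `f₀` the sequence `(Φ_p(f₀))_p` converges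
`m`-adically to `Ψ(f₀)`, and `(u_p · Φ_p(f₀))_p` converges to `u∞ · Ψ(f₀)`. -/
theorem convergence_lemma_apply
    {n : ℕ} {K : Type} [Field K] (M : ℕ) (hM : 1 ≤ M)
    (b0 : ℕ → MvPowerSeries (Fin n) K)
    (hb0 : ∀ p, 1 ≤ p → b0 p ∈ maxIdeal n K ^ (M + p - 1))
    (b : ℕ → Fin n → MvPowerSeries (Fin n) K)
    (hb : ∀ p, 1 ≤ p → ∀ i, b p i ∈ maxIdeal n K ^ (M + p))
    (φ : ℕ → (MvPowerSeries (Fin n) K →ₐ[K] MvPowerSeries (Fin n) K))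
    (hφloc : ∀ p, ∀ g ∈ maxIdeal n K, φ p g ∈ maxIdeal n K)
    (hφX : ∀ p, 1 ≤ p → ∀ i,
      φ p (MvPowerSeries.X i) = MvPowerSeries.X i + b p i)
    (Φ : ℕ → (MvPowerSeries (Fin n) K →ₐ[K] MvPowerSeries (Fin n) K))
    (hΦ0 : Φ 0 = AlgHom.id K (MvPowerSeries (Fin n) K))
    (hΦ : ∀ p, Φ (p + 1) = (φ (p + 1)).comp (Φ p))
    (u : ℕ → MvPowerSeries (Fin n) K)
    (hu0 : u 0 = 1)
    (hu : ∀ p, u (p + 1) = (1 + b0 (p + 1)) * φ (p + 1) (u p))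
    (blim : Fin n → MvPowerSeries (Fin n) K)
    (hblim : ∀ i, MAdicTendsto (fun p => Φ p (MvPowerSeries.X i))
      (MvPowerSeries.X i + blim i))
    (Ψ : MvPowerSeries (Fin n) K ≃ₐ[K] MvPowerSeries (Fin n) K)
    (hΨ : ∀ i, Ψ (MvPowerSeries.X i) = MvPowerSeries.X i + blim i)
    (ulim : MvPowerSeries (Fin n) K)
    (hulim : MAdicTendsto u ulim) :
    ∀ f0 : MvPowerSeries (Fin n) K,
      MAdicTendsto (fun p => Φ p f0) (Ψ f0) ∧
      MAdicTendsto (fun p => u p * Φ p f0) (ulim * Ψ f0) :=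
  convergence_lemma_apply_general Φ u blim hblim Ψ hΨ ulim hulim
end

section
/- Let K be a field, let f be a power series in K[[x_1,...,x_n]] and let phi be a local K-algebra automorphism of K[[x_1,...,x_n]]. Then J(phi(f)) = phi(J(f)), i.e. the Jacobian ideal of phi(f) equals the image under phi of the Jacobian ideal of f. In particular, the Milnor number mu(f) = dim_K K[[x_1,...,x_n]]/J(f) is invariant under right equivalence. -/
/-! The conjugate `φ⁻¹ ∘ ∂ᵢ ∘ φ` is again a derivation, and a derivation `D` of `R[[X₁,…,Xₙ]]`
is determined by the values `D Xⱼ`. Indeed, if these vanish then `D` kills every polynomial and maps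
`𝔪^(k+1)` into `𝔪^k`, where `𝔪 = (X₁,…,Xₙ)`; every series is a polynomial modulo `𝔪^(k+1)`, and `𝔪^k`
consists exactly of the series without terms of degree `< k` (as `R[[X]]` is the `𝔪`-adic completion
of `R[X]`), so `D = 0`. Comparing values on the `Xⱼ` gives the chain rule
`∂ᵢ(φ f) = ∑ⱼ ∂ᵢ(φ Xⱼ) · φ(∂ⱼ f)`, hence `J(φ f) ⊆ φ(J f)`; the reverse inclusion is the same
statement for `φ⁻¹`. -/

namespace Derivation

variable {R A : Type*} [CommRing R] [CommRing A] [Algebra R A]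

theorem map_mem_pow_of_mem_pow_succ (D : Derivation R A A) {I : Ideal A} {k : ℕ} {a : A}
    (ha : a ∈ I ^ (k + 1)) : D a ∈ I ^ k := by
  induction k generalizing a with
  | zero => simp
  | succ k ih =>
    rw [pow_succ'] at ha
    refine Submodule.mul_induction_on ha (fun x hx y hy => ?_) fun x y hx hy => ?_
    · rw [leibniz, smul_eq_mul, smul_eq_mul]
      refine add_mem ?_ (Ideal.mul_mem_right _ _ hy)
      rw [pow_succ']
      exact Ideal.mul_mem_mul hx (ih hy)
    · rw [map_add]
      exact add_mem hx hy

theorem sum_apply {M ι : Type*} [AddCommMonoid M] [Module A M] [Module R M] (s : Finset ι)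
    (D : ι → Derivation R A M) (a : A) :
    (∑ i ∈ s, D i) a = ∑ i ∈ s, D i a := by
  rw [← coeFnAddMonoidHom_apply, map_sum, Finset.sum_apply]
  rfl

def conj (φ : A ≃ₐ[R] A) (D : Derivation R A A) : Derivation R A A :=
  mk' (φ.symm.toLinearMap ∘ₗ D.toLinearMap ∘ₗ φ.toLinearMap) fun a b => by simp [leibniz]

theorem conj_apply (φ : A ≃ₐ[R] A) (D : Derivation R A A) (a : A) :
    D.conj φ a = φ.symm (D (φ a)) := rfl

end Derivation

namespace MvPowerSeries

open MvPolynomial Finsupp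

variable {σ R : Type*} [CommRing R]

theorem span_range_X_eq_map_idealOfVars :
    Ideal.span (Set.range (X : σ → MvPowerSeries σ R)) =
      (idealOfVars σ R).map (algebraMap (MvPolynomial σ R) (MvPowerSeries σ R)) := by
  rw [Ideal.map_span, ← Set.range_comp]
  congr
  ext i : 1
  simp [algebraMap_apply']

theorem mem_span_range_X_pow_iff [Finite σ] {f : MvPowerSeries σ R} {k : ℕ} :
    f ∈ Ideal.span (Set.range X) ^ k ↔ ∀ d, degree d < k → coeff d f = 0 := by
  let e := (toAdicCompletionAlgEquiv σ R).toLinearEquiv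
  have hmap : (idealOfVars σ R ^ k • ⊤ : Submodule (MvPolynomial σ R) (MvPowerSeries σ R)).map
      e.toLinearMap = idealOfVars σ R ^ k • ⊤ := by
    rw [Submodule.map_smul'', Submodule.map_top, LinearEquiv.range]
  calc f ∈ Ideal.span (Set.range X) ^ k
      ↔ f ∈ (idealOfVars σ R ^ k • ⊤ : Submodule (MvPolynomial σ R) (MvPowerSeries σ R)) := by
        rw [Ideal.smul_top_eq_map, span_range_X_eq_map_idealOfVars, Ideal.map_pow]; rfl
    _ ↔ AdicCompletion.eval _ _ k (e f) = 0 := by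
        rw [← LinearMap.mem_ker, ← AdicCompletion.pow_smul_top_eq_ker_eval (idealOfVars_fg σ R),
          ← hmap, Submodule.mem_map_equiv, LinearEquiv.symm_apply_apply]
    _ ↔ truncTotal k f ∈ idealOfVars σ R ^ k := by
        change (toAdicCompletion σ R f).val k = 0 ↔ _
        rw [toAdicCompletion_apply_eq_mk_truncTotal, Ideal.Quotient.eq_zero_iff_mem, smul_eq_mul,
          Ideal.mul_top]
    _ ↔ ∀ d, degree d < k → coeff d f = 0 := by
        rw [mem_pow_idealOfVars_iff']
        exact forall₂_congr fun d hd => by rw [coeff_truncTotal _ hd]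

theorem sub_truncTotal_mem_span_range_X_pow [Finite σ] (f : MvPowerSeries σ R) (k : ℕ) :
    f - truncTotal k f ∈ Ideal.span (Set.range X) ^ k :=
  mem_span_range_X_pow_iff.mpr fun d hd => by
    rw [map_sub, MvPolynomial.coeff_coe, coeff_truncTotal _ hd, sub_self]

theorem derivation_ext [Finite σ] {D₁ D₂ : Derivation R (MvPowerSeries σ R) (MvPowerSeries σ R)}
    (h : ∀ i, D₁ (X i) = D₂ (X i)) : D₁ = D₂ := by
  rw [← sub_eq_zero]
  set D := D₁ - D₂
  have hX : ∀ i, D (X i) = 0 := fun i => by simp [D, h i]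
  have hpoly : ∀ P : MvPolynomial σ R, D P = 0 := fun P => by
    have := MvPolynomial.derivation_ext (D₁ := D.compAlgebraMap (MvPolynomial σ R)) (D₂ := 0)
      fun i => by simpa [algebraMap_apply'] using hX i
    simpa [algebraMap_apply'] using congr($this P)
  ext f d : 2
  have hd := D.map_mem_pow_of_mem_pow_succ (sub_truncTotal_mem_span_range_X_pow f (degree d + 2))
  rw [map_sub, hpoly, sub_zero, mem_span_range_X_pow_iff] at hd
  exact hd d (by omega)

theorem pderiv_algEquiv_apply [Fintype σ] (φ : MvPowerSeries σ R ≃ₐ[R] MvPowerSeries σ R)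
    (i : σ) (f : MvPowerSeries σ R) :
    pderiv R i (φ f) = ∑ j, pderiv R i (φ (X j)) * φ (pderiv R j f) := by
  classical
  have h : (pderiv R i).conj φ = ∑ j, φ.symm (pderiv R i (φ (X j))) • pderiv R j :=
    derivation_ext fun k => by
      simp [Derivation.conj_apply, Derivation.sum_apply, pderiv_X, Pi.single_apply]
  have hf := congr($h f)
  rw [Derivation.conj_apply, AlgEquiv.symm_apply_eq] at hf
  simp [hf, Derivation.sum_apply]

theorem span_range_pderiv_algEquiv_le [Fintype σ]
    (φ : MvPowerSeries σ R ≃ₐ[R] MvPowerSeries σ R) (f : MvPowerSeries σ R) :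
    Ideal.span (Set.range fun i => pderiv R i (φ f)) ≤
      (Ideal.span (Set.range fun i => pderiv R i f)).map φ := by
  rw [Ideal.span_le]
  rintro _ ⟨i, rfl⟩
  change pderiv R i (φ f) ∈ _
  rw [pderiv_algEquiv_apply]
  exact Ideal.sum_mem _ fun j _ =>
    Ideal.mul_mem_left _ _ (Ideal.mem_map_of_mem _ (Ideal.subset_span ⟨j, rfl⟩))

theorem span_range_pderiv_algEquiv [Fintype σ]
    (φ : MvPowerSeries σ R ≃ₐ[R] MvPowerSeries σ R) (f : MvPowerSeries σ R) :
    Ideal.span (Set.range fun i => pderiv R i (φ f)) =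
      (Ideal.span (Set.range fun i => pderiv R i f)).map φ := by
  refine le_antisymm (span_range_pderiv_algEquiv_le φ f) ?_
  have h := span_range_pderiv_algEquiv_le φ.symm (φ f)
  rw [AlgEquiv.symm_apply_apply] at h
  rw [Ideal.map_le_iff_le_comap]
  convert h using 1
  exact (Ideal.map_symm (φ : MvPowerSeries σ R ≃+* MvPowerSeries σ R)).symm

end MvPowerSeries

theorem pderiv_eq_mvPowerSeries_pderiv {n : ℕ} {K : Type} [Field K] (i : Fin n)
    (f : MvPowerSeries (Fin n) K) : pderiv i f = MvPowerSeries.pderiv K i f := by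
  ext d
  rw [MvPowerSeries.coeff_pderiv, mul_comm]
  rfl

theorem jacobianIdeal_eq_span_range_pderiv {n : ℕ} {K : Type} [Field K]
    (f : MvPowerSeries (Fin n) K) :
    jacobianIdeal f = Ideal.span (Set.range fun i => MvPowerSeries.pderiv K i f) := by
  simp only [jacobianIdeal, pderiv_eq_mvPowerSeries_pderiv]

/-- `J(φ(f)) = φ(J(f))` for any `K`-algebra automorphism
`φ`; in particular the Milnor number is invariant under right equivalence. -/
theorem jacobianIdeal_map_algEquiv
    {n : ℕ} {K : Type} [Field K] (f : MvPowerSeries (Fin n) K)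
    (φ : MvPowerSeries (Fin n) K ≃ₐ[K] MvPowerSeries (Fin n) K) :
    jacobianIdeal (φ f) = Ideal.map φ (jacobianIdeal f) ∧
      ∀ g : MvPowerSeries (Fin n) K, RightEquiv f g →
        Module.rank K (MvPowerSeries (Fin n) K ⧸ jacobianIdeal f) =
          Module.rank K (MvPowerSeries (Fin n) K ⧸ jacobianIdeal g) := by
  have hJ : ∀ (ψ : MvPowerSeries (Fin n) K ≃ₐ[K] MvPowerSeries (Fin n) K) g,
      jacobianIdeal (ψ g) = Ideal.map ψ (jacobianIdeal g) := fun ψ g => by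
    simp only [jacobianIdeal_eq_span_range_pderiv, MvPowerSeries.span_range_pderiv_algEquiv]
  refine ⟨hJ φ f, ?_⟩
  rintro g ⟨ψ, rfl⟩
  exact (Ideal.quotientEquivAlg _ _ ψ (hJ ψ g)).toLinearEquiv.rank_eq.symm
end
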